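/- arXiv:2403.00720 — 4 statements merged into one kernel-verified Lean document; each statement's English description precedes it below -/
import Mathlib

section
/- Let σ(z) = tanh(z) + α with α > 1. Then σ(z) > 0 for all z ∈ ℝ, and there exists μ > 0 such that |z|·σ'(z) ≤ μ·σ(z) for all z ∈ ℝ. -/
/-! Since `|z| ≤ |sinh z| ≤ cosh z ^ 2`, we get `|z| σ'(z) = |z| / cosh z ^ 2 ≤ 1`, while
`σ ≥ α - 1 > 0`; hence `μ = 1 / (α - 1)` works. -/

open Real

theorem Real.hasDerivAt_tanh (x : ℝ) : HasDerivAt tanh (1 / cosh x ^ 2) x := by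
  have h := (hasDerivAt_sinh x).div (hasDerivAt_cosh x) (cosh_pos x).ne'
  rw [show cosh x * cosh x - sinh x * sinh x = 1 by linear_combination cosh_sq_sub_sinh_sq x] at h
  rwa [show tanh = sinh / cosh from funext tanh_eq_sinh_div_cosh]

theorem Real.abs_le_cosh_sq (x : ℝ) : |x| ≤ cosh x ^ 2 := by
  have h : |x| ≤ |sinh x| := by
    rw [abs_sinh]
    exact self_le_sinh_iff.2 (abs_nonneg x)
  nlinarith [cosh_sq x, sq_abs (sinh x), sq_nonneg (|sinh x| - 1)]

theorem Real.abs_mul_one_div_cosh_sq_le_one (x : ℝ) : |x| * (1 / cosh x ^ 2) ≤ 1 := by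
  rw [mul_one_div, div_le_one (by positivity)]
  exact abs_le_cosh_sq x

/-- σ(z) = tanh(z)+α with α > 1 is positive and μ-subhomogeneous on ℝ for some μ > 0. -/
theorem shifted_tanh_subhomogeneous (α : ℝ) (hα : 1 < α) :
    (∀ z : ℝ, 0 < Real.tanh z + α) ∧
    ∃ μ : ℝ, 0 < μ ∧ ∀ z : ℝ,
      |z| * deriv (fun w : ℝ => Real.tanh w + α) z ≤ μ * (Real.tanh z + α) := by
  have hα' : 0 < α - 1 := sub_pos.2 hα
  refine ⟨fun z => by linarith [neg_one_lt_tanh z], 1 / (α - 1), by positivity, fun z => ?_⟩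
  rw [((hasDerivAt_tanh z).add_const α).deriv]
  calc |z| * (1 / cosh z ^ 2) ≤ 1 := abs_mul_one_div_cosh_sq_le_one z
    _ = 1 / (α - 1) * (α - 1) := by field_simp
    _ ≤ 1 / (α - 1) * (tanh z + α) := by gcongr; linarith [neg_one_lt_tanh z]
end

section
/- For all real z, |z|·sech²(z) ≤ tanh(z) + 1.2. -/
/-!
Multiplying by `(eᶻ + e⁻ᶻ)²` and putting `t = 2z`, the claim becomes `10|t| ≤ 11eᵗ + e⁻ᵗ + 12`.
Bounding the two exponentials by their tangent lines at a common point `c` makes the right-hand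
side linear in `t`. The point `c = 0` handles `t ≥ 0`; for `t ≤ 0` take `c = -log 11`, the
minimiser of `11eᵗ + e⁻ᵗ + 10t`, which leaves the margin `24 - 10 log 11 ≥ 0`.
-/

open Real

lemma exp_mul_sub_add_one_le_exp (c t : ℝ) : exp c * (t - c + 1) ≤ exp t := by
  calc exp c * (t - c + 1) ≤ exp c * exp (t - c) := by gcongr; exact add_one_le_exp _
    _ = exp t := by rw [← exp_add, add_sub_cancel]

lemma log_eleven_le : log 11 ≤ 2.4 := by
  rw [log_le_iff_le_exp (by norm_num)]
  have h5 : (11 : ℝ) ^ 5 ≤ exp 2.4 ^ 5 :=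
    calc (11 : ℝ) ^ 5 ≤ 2.7182818283 ^ 12 := by norm_num
      _ ≤ exp 1 ^ 12 := pow_le_pow_left₀ (by norm_num) exp_one_gt_d9.le 12
      _ = exp 2.4 ^ 5 := by rw [← exp_nat_mul, ← exp_nat_mul]; norm_num
  exact le_of_pow_le_pow_left₀ (by norm_num) (exp_pos _).le h5

lemma ten_mul_abs_le_exp (t : ℝ) : 10 * |t| ≤ 11 * exp t + exp (-t) + 12 := by
  rcases abs_cases t with ⟨ht, -⟩ | ⟨ht, -⟩
  · have hpos := exp_mul_sub_add_one_le_exp 0 t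
    have hneg := exp_mul_sub_add_one_le_exp 0 (-t)
    simp only [exp_zero, one_mul] at hpos hneg
    linarith
  · have h11 : exp (log 11) = 11 := exp_log (by norm_num)
    have hpos := exp_mul_sub_add_one_le_exp (-log 11) t
    have hneg := exp_mul_sub_add_one_le_exp (log 11) (-t)
    rw [exp_neg, h11] at hpos
    rw [h11] at hneg
    have := log_eleven_le
    field_simp at hpos
    linarith

/-- For all real z, |z|·sech²(z) ≤ tanh(z) + 1.2, where sech²(z) = 4/(e^z+e^{-z})². -/
theorem abs_mul_sech_sq_le_tanh_add (z : ℝ) :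
    |z| * (4 / (Real.exp z + Real.exp (-z)) ^ 2) ≤ Real.tanh z + 1.2 := by
  have hprod : exp z * exp (-z) = 1 := by rw [← exp_add, add_neg_cancel, exp_zero]
  have htanh : tanh z * (exp z + exp (-z)) ^ 2 = exp z ^ 2 - exp (-z) ^ 2 := by
    rw [tanh_eq_sinh_div_cosh, sinh_eq, cosh_eq]
    field_simp
    ring
  have key := ten_mul_abs_le_exp (2 * z)
  rw [abs_mul, abs_two, mul_comm 2 z, ← neg_mul, exp_mul, exp_mul] at key
  norm_cast at key
  rw [mul_div_assoc', div_le_iff₀ (by positivity), add_mul, htanh]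
  linarith
end

section
/- For all real z, 2|z|·sech²(z) ≤ tanh(z) + 1.603. -/
/-- For all real z, 2|z|·sech²(z) ≤ tanh(z) + 1.603, where sech²(z) = 4/(e^z+e^{-z})². -/
theorem two_abs_mul_sech_sq_le_tanh_add (z : ℝ) :
    2 * |z| * (4 / (Real.exp z + Real.exp (-z)) ^ 2) ≤ Real.tanh z + 1.603 := by
  set a := Real.exp z with ha
  set b := Real.exp (-z) with hb
  have hapos : 0 < a := Real.exp_pos z
  have hbpos : 0 < b := Real.exp_pos (-z)
  have hab : a * b = 1 := by rw [ha, hb, ← Real.exp_add]; simp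
  -- numeric exp bounds
  have he2lo : (7.389056 : ℝ) ≤ Real.exp 2 := by
    have h1 := Real.exp_one_gt_d9
    have h2 : Real.exp 2 = Real.exp 1 * Real.exp 1 := by
      rw [← Real.exp_add]; norm_num
    nlinarith
  have he2hi : Real.exp 2 ≤ (7.3890562 : ℝ) := by
    have h1 := Real.exp_one_lt_d9
    have h2 : Real.exp 2 = Real.exp 1 * Real.exp 1 := by
      rw [← Real.exp_add]; norm_num
    nlinarith [Real.exp_pos 1]
  have he198 : (7.2412 : ℝ) ≤ Real.exp 1.98 := by
    have hm : Real.exp 1.98 * Real.exp 0.02 = Real.exp 2 := by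
      rw [← Real.exp_add]; norm_num
    have h02 : Real.exp 0.02 ≤ 1 / 0.98 := by
      have h := Real.add_one_le_exp (-0.02 : ℝ)
      have hinv : Real.exp (0.02 : ℝ) = (Real.exp (-0.02 : ℝ))⁻¹ := by
        rw [← Real.exp_neg]; norm_num
      rw [hinv]
      rw [inv_le_comm₀ (Real.exp_pos _) (by norm_num)]
      calc (1 / 0.98 : ℝ)⁻¹ = 0.98 := by norm_num
        _ ≤ Real.exp (-0.02) := by linarith
    nlinarith [Real.exp_pos (0.02 : ℝ), Real.exp_pos (1.98 : ℝ)]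
  have hen198 : (0.138 : ℝ) ≤ Real.exp (-1.98) := by
    have hm : Real.exp (-1.98) * Real.exp 2 = Real.exp 0.02 := by
      rw [← Real.exp_add]; norm_num
    have h02 : (1.02 : ℝ) ≤ Real.exp 0.02 := by
      have := Real.add_one_le_exp (0.02 : ℝ); linarith
    nlinarith [Real.exp_pos (2 : ℝ), Real.exp_pos (-1.98 : ℝ)]
  -- key inequality
  have key : 8 * |z| ≤ 2.603 * a ^ 2 + 0.603 * b ^ 2 + 3.206 := by
    have ha2 : a ^ 2 = Real.exp (2 * z) := by
      rw [ha, sq, ← Real.exp_add]; ring_nf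
    have hb2 : b ^ 2 = Real.exp (-(2 * z)) := by
      rw [hb, sq, ← Real.exp_add]; ring_nf
    rcases le_or_gt 0 z with hz | hz
    · -- z ≥ 0 : easy case
      rw [abs_of_nonneg hz]
      have h1 : z + 1 ≤ a := by rw [ha]; exact Real.add_one_le_exp _
      nlinarith [mul_le_mul h1 h1 (by linarith) hapos.le, sq_nonneg z, sq_nonneg b]
    · rw [abs_of_neg hz]
      rcases le_or_gt (-(1:ℝ)/2) z with hz2 | hz2
      · -- -1/2 ≤ z < 0 : linear bounds
        have h1 : 2 * z + 1 ≤ Real.exp (2 * z) := Real.add_one_le_exp _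
        have h2 : -(2 * z) + 1 ≤ Real.exp (-(2 * z)) := Real.add_one_le_exp _
        rw [ha2, hb2]
        nlinarith
      · -- z < -1/2 : tangent at 1.98
        have hB : 7.2412 * (-2 * z - 0.98) ≤ b ^ 2 := by
          have h2 : -2 * z - 0.98 ≤ Real.exp (-2 * z - 1.98) := by
            have := Real.add_one_le_exp (-2 * z - 1.98); linarith
          have hsplit : Real.exp 1.98 * Real.exp (-2 * z - 1.98) = b ^ 2 := by
            rw [hb2, ← Real.exp_add]; norm_num
          calc 7.2412 * (-2 * z - 0.98)
              ≤ Real.exp 1.98 * Real.exp (-2 * z - 1.98) := by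
                apply mul_le_mul he198 h2 (by linarith) (Real.exp_pos _).le
            _ = b ^ 2 := hsplit
        have hA : 0.138 * (2 * z + 2.98) ≤ a ^ 2 := by
          rcases le_or_gt (2 * z + 2.98) 0 with h | h
          · nlinarith [sq_nonneg a, hapos]
          · have h2 : 2 * z + 2.98 ≤ Real.exp (2 * z + 1.98) := by
              have := Real.add_one_le_exp (2 * z + 1.98); linarith
            have hsplit : Real.exp (-1.98) * Real.exp (2 * z + 1.98) = a ^ 2 := by
              rw [ha2, ← Real.exp_add]; norm_num
            calc 0.138 * (2 * z + 2.98)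
                ≤ Real.exp (-1.98) * Real.exp (2 * z + 1.98) := by
                  apply mul_le_mul hen198 h2 h.le (Real.exp_pos _).le
              _ = a ^ 2 := hsplit
        nlinarith [hA, hB]
  -- assemble
  have htanh : Real.tanh z = (a - b) / (a + b) := by
    rw [Real.tanh_eq_sinh_div_cosh, Real.sinh_eq, Real.cosh_eq, ha, hb]
    have hsum : Real.exp z + Real.exp (-z) ≠ 0 := by positivity
    field_simp
  have hd2 : (0 : ℝ) < (a + b) ^ 2 := by positivity
  rw [htanh]
  have hrw : 2 * |z| * (4 / (a + b) ^ 2) = 8 * |z| / (a + b) ^ 2 := by ring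
  rw [hrw, div_le_iff₀ hd2]
  have expand : ((a - b) / (a + b) + 1.603) * (a + b) ^ 2
      = 2.603 * a ^ 2 + 0.603 * b ^ 2 + 3.206 * (a * b) := by
    field_simp
    ring
  rw [expand, hab]
  linarith [key]
end

section
/- Let F: ℝⁿ → ℝⁿ be differentiable with F(z) > 0 and F'(z) entrywise strictly positive for all z > 0, and suppose F'(z)·z ≤ μ·F(z) entrywise for all z > 0. Then for all z > 0 and all λ ≥ 1, F(λz) ≤ λ^μ · F(z) entrywise. -/
/-!
Along a ray, `φ(t) = F(t z)_i` satisfies `t φ'(t) = (F'(t z)(t z))_i ≤ μ φ(t)`, so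
`t ↦ φ(t) t^(-μ)` has derivative `t^(-μ-1) (t φ'(t) - μ φ(t)) ≤ 0` and is antitone on
`(0, ∞)`; comparing `t = λ` with `t = 1` gives `F(λ z)_i ≤ λ^μ F(z)_i`.
-/

open Set

theorem antitoneOn_mul_rpow_neg_of_mul_deriv_le {f f' : ℝ → ℝ} {μ : ℝ}
    (hf : ∀ t > 0, HasDerivAt f (f' t) t) (hle : ∀ t > 0, t * f' t ≤ μ * f t) :
    AntitoneOn (fun t => f t * t ^ (-μ)) (Ioi 0) := by
  have hderiv : ∀ t > 0, HasDerivAt (fun t => f t * t ^ (-μ))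
      (f' t * t ^ (-μ) + f t * (-μ * t ^ (-μ - 1))) t := fun t ht =>
    (hf t ht).mul (Real.hasDerivAt_rpow_const (Or.inl ht.ne'))
  refine antitoneOn_of_hasDerivWithinAt_nonpos
    (f' := fun t => f' t * t ^ (-μ) + f t * (-μ * t ^ (-μ - 1))) (convex_Ioi 0)
    (fun t ht => (hderiv t ht).continuousAt.continuousWithinAt) ?_ ?_
  · intro t ht
    rw [interior_Ioi] at ht
    exact (hderiv t ht).hasDerivWithinAt
  · intro t ht
    rw [interior_Ioi, mem_Ioi] at ht
    have hfactor : f' t * t ^ (-μ) + f t * (-μ * t ^ (-μ - 1))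
        = t ^ (-μ - 1) * (t * f' t - μ * f t) := by
      rw [Real.rpow_sub_one ht.ne']
      field_simp
      ring
    rw [hfactor]
    exact mul_nonpos_of_nonneg_of_nonpos (Real.rpow_nonneg ht.le _) (by linarith [hle t ht])

theorem le_rpow_mul_of_mul_deriv_le {f f' : ℝ → ℝ} {μ : ℝ}
    (hf : ∀ t > 0, HasDerivAt f (f' t) t) (hle : ∀ t > 0, t * f' t ≤ μ * f t)
    {lam : ℝ} (hlam : 1 ≤ lam) : f lam ≤ lam ^ μ * f 1 := by
  have hlam₀ : 0 < lam := zero_lt_one.trans_le hlam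
  have hmono : f lam * lam ^ (-μ) ≤ f 1 * 1 ^ (-μ) :=
    antitoneOn_mul_rpow_neg_of_mul_deriv_le hf hle (mem_Ioi.2 one_pos) (mem_Ioi.2 hlam₀) hlam
  rw [Real.one_rpow, mul_one, Real.rpow_neg hlam₀.le, ← div_eq_mul_inv,
    div_le_iff₀ (Real.rpow_pos_of_pos hlam₀ μ)] at hmono
  linarith

theorem HasFDerivAt.hasDerivAt_comp_smul_const {E G : Type*} [NormedAddCommGroup E]
    [NormedSpace ℝ E] [NormedAddCommGroup G] [NormedSpace ℝ G]
    {F : E → G} {F' : E →L[ℝ] G} {z : E} {t : ℝ} (hF : HasFDerivAt F F' (t • z)) :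
    HasDerivAt (fun s : ℝ => F (s • z)) (F' z) t :=
  hF.comp_hasDerivAt t (by simpa using (hasDerivAt_id t).smul_const z)

theorem subhom_implies_scaling_general (n : ℕ) (μ : ℝ)
    (F : (Fin n → ℝ) → (Fin n → ℝ)) (hdiff : Differentiable ℝ F)
    (hsub : ∀ z : Fin n → ℝ, (∀ i, 0 < z i) → ∀ i, fderiv ℝ F z z i ≤ μ * F z i) :
    ∀ z : Fin n → ℝ, (∀ i, 0 < z i) → ∀ lam : ℝ, 1 ≤ lam →
      ∀ i, F (lam • z) i ≤ lam ^ μ * F z i := by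
  intro z hz lam hlam i
  have hray : ∀ t > 0, HasDerivAt (fun s : ℝ => F (s • z) i) (fderiv ℝ F (t • z) z i) t :=
    fun t _ => hasDerivAt_pi.mp (hdiff (t • z)).hasFDerivAt.hasDerivAt_comp_smul_const i
  have hEuler : ∀ t > 0, t * fderiv ℝ F (t • z) z i ≤ μ * F (t • z) i := fun t ht => by
    have := hsub (t • z) (fun j => by simpa using mul_pos ht (hz j)) i
    rwa [map_smul, Pi.smul_apply, smul_eq_mul] at this
  simpa using le_rpow_mul_of_mul_deriv_le hray hEuler hlam

/-- Euler-type characterization, forward direction: if F is differentiable, positive with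
entrywise positive Jacobian on the positive orthant, and F'(z)·z ≤ μ·F(z) entrywise there,
then F(λz) ≤ λ^μ·F(z) entrywise for λ ≥ 1. -/
theorem subhom_implies_scaling (n : ℕ) (μ : ℝ) (hμ : 0 < μ)
    (F : (Fin n → ℝ) → (Fin n → ℝ)) (hdiff : Differentiable ℝ F)
    (hpos : ∀ z : Fin n → ℝ, (∀ i, 0 < z i) → ∀ i, 0 < F z i)
    (hjac : ∀ z : Fin n → ℝ, (∀ i, 0 < z i) → ∀ i j, 0 < fderiv ℝ F z (Pi.single j 1) i)
    (hsub : ∀ z : Fin n → ℝ, (∀ i, 0 < z i) → ∀ i, fderiv ℝ F z z i ≤ μ * F z i) :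
    ∀ z : Fin n → ℝ, (∀ i, 0 < z i) → ∀ lam : ℝ, 1 ≤ lam →
      ∀ i, F (lam • z) i ≤ lam ^ μ * F z i :=
  subhom_implies_scaling_general n μ F hdiff hsub
end
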